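/- (Scalar form of Theorem 4, pure-state case.) Let $\alpha$ be a real number with $(\sqrt{7}-1)/2 \leq \alpha \leq (\sqrt{13}-1)/2$ and $\alpha \neq 1$, let $n \geq 2$, and let $c_2, \dots, c_n$ be nonnegative real numbers with $\sum_{i=2}^{n} c_i \leq 1$. Then $\left(f_\alpha\left(\sum_{i=2}^{n} c_i\right)\right)^2 \leq (n-1) \sum_{i=2}^{n} \left(f_\alpha(c_i)\right)^2$. -/

import Mathlib

/-!
Write `p ≤ q` for the eigenvalues `(1 ∓ √(1 - x)) / 2`, so that `f_α = log₂ (p^α + q^α) / (1 - α)`.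
Differentiating twice, `f_α''` has the sign of `-(1 - α) Φ_α(p / q)` for an explicit function
`Φ_α`. For `α < 1`, `Φ_α ≥ 0` follows from AM-GM and `sinh (β s) ≤ β sinh s` for `β ∈ [0, 1]`.
For `α > 1`, `Φ_α(e^{-s})` is a positive multiple of an odd combination `Ψ` of `sinh (k s)` whose
first-order term vanishes; convexity of `cosh` bounds `Ψ'''` by `2γ(γ² + 3γ - 1) cosh (s/2)`
with `γ = α - 1`, and this is `≤ 0` exactly when `α² + α ≤ 3`, i.e. `α ≤ (√13 - 1) / 2`.
So `f_α` is concave on `[0, 1]` with `f_α 0 = 0`, hence subadditive, and Cauchy–Schwarz bounds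
`(∑ f_α(cᵢ))²` by `(n - 1) ∑ f_α(cᵢ)²`.
-/

/-- The function expressing the Rényi-α entanglement of a two-qubit state as a function of
its squared concurrence:
`f_α(x) = (1/(1-α)) * log₂ [ ((1-√(1-x))/2)^α + ((1+√(1-x))/2)^α ]`. -/
noncomputable def renyiF (α x : ℝ) : ℝ :=
  (1 / (1 - α)) *
    Real.logb 2 (((1 - Real.sqrt (1 - x)) / 2) ^ α + ((1 + Real.sqrt (1 - x)) / 2) ^ α)

section

open Real Set

theorem ConcaveOn.map_add_le {s : Set ℝ} {f : ℝ → ℝ} (hf : ConcaveOn ℝ s f) (h0 : (0 : ℝ) ∈ s)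
    (hf0 : 0 ≤ f 0) {x y : ℝ} (hx : 0 ≤ x) (hy : 0 ≤ y) (hxy : x + y ∈ s) :
    f (x + y) ≤ f x + f y := by
  rcases (add_nonneg hx hy).eq_or_lt with hzero | hpos
  · obtain rfl : x = 0 := by linarith
    obtain rfl : y = 0 := by linarith
    rw [add_zero]
    linarith
  have scaled : ∀ a b : ℝ, 0 ≤ a → 0 ≤ b → a + b = 1 → a * f (x + y) ≤ f (a * (x + y)) :=
    fun a b ha hb hab => by
      have := hf.2 hxy h0 ha hb hab
      simp only [smul_eq_mul, mul_zero, add_zero] at this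
      linarith [mul_nonneg hb hf0]
  have hsum : x / (x + y) + y / (x + y) = 1 := by field_simp
  have hfx := scaled _ _ (by positivity) (by positivity) hsum
  have hfy := scaled _ _ (by positivity) (by positivity) ((add_comm _ _).trans hsum)
  rw [div_mul_cancel₀ _ hpos.ne'] at hfx hfy
  calc f (x + y) = (x / (x + y) + y / (x + y)) * f (x + y) := by rw [hsum, one_mul]
    _ ≤ f x + f y := by linarith

theorem ConcaveOn.map_sum_le {ι : Type*} {f : ℝ → ℝ} {b : ℝ} (hf : ConcaveOn ℝ (Icc 0 b) f)
    (hf0 : f 0 = 0) (I : Finset ι) {c : ι → ℝ} (hc : ∀ i ∈ I, 0 ≤ c i)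
    (hsum : ∑ i ∈ I, c i ≤ b) : f (∑ i ∈ I, c i) ≤ ∑ i ∈ I, f (c i) := by
  classical
  induction I using Finset.induction_on with
  | empty => simp [hf0]
  | insert j I hj ih =>
    rw [Finset.sum_insert hj] at hsum ⊢
    rw [Finset.sum_insert hj]
    have hcj := hc j (Finset.mem_insert_self j I)
    have hcI : ∀ i ∈ I, 0 ≤ c i := fun i hi => hc i (Finset.mem_insert_of_mem hi)
    have hI := Finset.sum_nonneg hcI
    calc f (c j + ∑ i ∈ I, c i) ≤ f (c j) + f (∑ i ∈ I, c i) :=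
          hf.map_add_le ⟨le_rfl, by linarith⟩ hf0.ge hcj hI ⟨by linarith, hsum⟩
      _ ≤ f (c j) + ∑ i ∈ I, f (c i) := by gcongr; exact ih hcI (by linarith)

theorem nonpos_of_hasDerivAt_nonpos {g g' : ℝ → ℝ} (hg : ∀ s, 0 ≤ s → HasDerivAt g (g' s) s)
    (h0 : g 0 ≤ 0) (h' : ∀ s, 0 ≤ s → g' s ≤ 0) {s : ℝ} (hs : 0 ≤ s) : g s ≤ 0 := by
  have hanti : AntitoneOn g (Ici 0) := by
    refine antitoneOn_of_hasDerivWithinAt_nonpos (f' := g') (convex_Ici 0)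
      (fun x hx => (hg x hx).continuousAt.continuousWithinAt) (fun x hx => ?_) (fun x hx => ?_)
    · rw [interior_Ici] at hx
      exact (hg x (le_of_lt hx)).hasDerivWithinAt
    · rw [interior_Ici] at hx
      exact h' x (le_of_lt hx)
  exact (hanti self_mem_Ici hs hs).trans h0

theorem exists_eq_exp_neg {r : ℝ} (hr0 : 0 < r) (hr1 : r ≤ 1) : ∃ s, 0 ≤ s ∧ r = exp (-s) :=
  ⟨-log r, neg_nonneg.2 (log_nonpos hr0.le hr1), by rw [neg_neg, exp_log hr0]⟩

section SinhSums

variable {ι : Type*} (I : Finset ι) (a k : ι → ℝ)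

theorem hasDerivAt_sum_mul_sinh (s : ℝ) :
    HasDerivAt (fun s => ∑ i ∈ I, a i * sinh (k i * s)) (∑ i ∈ I, a i * k i * cosh (k i * s)) s :=
  HasDerivAt.fun_sum fun i _ => by
    simpa [mul_comm, mul_assoc] using
      (((hasDerivAt_id s).const_mul (k i)).sinh).const_mul (a i)

theorem hasDerivAt_sum_mul_cosh (s : ℝ) :
    HasDerivAt (fun s => ∑ i ∈ I, a i * cosh (k i * s)) (∑ i ∈ I, a i * k i * sinh (k i * s)) s :=
  HasDerivAt.fun_sum fun i _ => by
    simpa [mul_comm, mul_assoc] using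
      (((hasDerivAt_id s).const_mul (k i)).cosh).const_mul (a i)

theorem sum_mul_sinh_nonpos (h1 : ∑ i ∈ I, a i * k i = 0)
    (h3 : ∀ s, 0 ≤ s → ∑ i ∈ I, a i * k i * k i * k i * cosh (k i * s) ≤ 0)
    {s : ℝ} (hs : 0 ≤ s) : ∑ i ∈ I, a i * sinh (k i * s) ≤ 0 := by
  have hderiv2 : ∀ s, 0 ≤ s → ∑ i ∈ I, a i * k i * k i * sinh (k i * s) ≤ 0 := fun s hs =>
    nonpos_of_hasDerivAt_nonpos
      (fun s _ => hasDerivAt_sum_mul_sinh I (fun i => a i * k i * k i) k s) (by simp) h3 hs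
  have hderiv1 : ∀ s, 0 ≤ s → ∑ i ∈ I, a i * k i * cosh (k i * s) ≤ 0 := fun s hs =>
    nonpos_of_hasDerivAt_nonpos (fun s _ => hasDerivAt_sum_mul_cosh I (fun i => a i * k i) k s)
      (by simp [h1]) hderiv2 hs
  exact nonpos_of_hasDerivAt_nonpos (fun s _ => hasDerivAt_sum_mul_sinh I a k s) (by simp)
    hderiv1 hs

end SinhSums

theorem sinh_mul_le_mul_sinh {β s : ℝ} (hβ0 : 0 ≤ β) (hβ1 : β ≤ 1) (hs : 0 ≤ s) :
    sinh (β * s) ≤ β * sinh s := by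
  have hβ3 : β * β * β ≤ β := by nlinarith [mul_le_mul hβ1 hβ1 hβ0 zero_le_one]
  have := sum_mul_sinh_nonpos Finset.univ ![1, -β] ![β, 1] (by simp) (fun u hu => by
    have hcosh : cosh (β * u) ≤ cosh u := by
      rw [cosh_le_cosh, abs_of_nonneg hu, abs_of_nonneg (mul_nonneg hβ0 hu)]
      nlinarith
    simp only [Fin.sum_univ_two, Matrix.cons_val, one_mul]
    nlinarith [cosh_pos u, mul_le_mul_of_nonneg_left hcosh (by positivity : 0 ≤ β * β * β)]) hs
  simp only [Fin.sum_univ_two, Matrix.cons_val, one_mul] at this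
  linarith

theorem convexOn_cosh : ConvexOn ℝ univ cosh := by
  refine ⟨convex_univ, fun x _ y _ a b ha hb hab => ?_⟩
  have hpos := convexOn_exp.2 (mem_univ x) (mem_univ y) ha hb hab
  have hneg := convexOn_exp.2 (mem_univ (-x)) (mem_univ (-y)) ha hb hab
  simp only [smul_eq_mul] at hpos hneg ⊢
  rw [cosh_eq, cosh_eq, cosh_eq, show -(a * x + b * y) = a * -x + b * -y by ring]
  linarith

noncomputable def renyiPsi (γ s : ℝ) : ℝ :=
  3 * sinh ((1 / 2 + γ) * s) + sinh ((1 / 2 - γ) * s) - γ * sinh (3 / 2 * s)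
    - (4 + γ) * sinh (s / 2)

-- With `a = 1/2 + γ`, `b = 1/2 - γ`: bound `cosh (a u)` by convexity of `cosh` between `u/2` and
-- `3u/2`, and `cosh (b u)` by `cosh (u/2)`; the coefficients then add up to
-- `2γ(γ² + 3γ - 1) cosh (u/2) ≤ 0`.
theorem renyiPsi_third_deriv_nonpos {γ u : ℝ} (hγ : 0 ≤ γ) (hγ1 : γ ^ 2 + 3 * γ ≤ 1) (hu : 0 ≤ u) :
    3 * (1 / 2 + γ) ^ 3 * cosh ((1 / 2 + γ) * u) + (1 / 2 - γ) ^ 3 * cosh ((1 / 2 - γ) * u)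
      - γ * (3 / 2) ^ 3 * cosh (3 / 2 * u) - (4 + γ) * (1 / 2) ^ 3 * cosh (1 / 2 * u) ≤ 0 := by
  have hγ3 : γ ≤ 1 / 3 := by nlinarith
  have hca : cosh ((1 / 2 + γ) * u) ≤ (1 - γ) * cosh (1 / 2 * u) + γ * cosh (3 / 2 * u) := by
    have h := convexOn_cosh.2 (mem_univ (1 / 2 * u)) (mem_univ (3 / 2 * u))
      (by linarith : 0 ≤ 1 - γ) hγ (by ring)
    simp only [smul_eq_mul] at h
    rwa [show (1 - γ) * (1 / 2 * u) + γ * (3 / 2 * u) = (1 / 2 + γ) * u by ring] at h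
  have hcb : cosh ((1 / 2 - γ) * u) ≤ cosh (1 / 2 * u) := by
    rw [cosh_le_cosh, abs_of_nonneg (by nlinarith), abs_of_nonneg (by positivity)]
    nlinarith
  have hc13 : cosh (1 / 2 * u) ≤ cosh (3 / 2 * u) := by
    rw [cosh_le_cosh, abs_of_nonneg (by positivity), abs_of_nonneg (by positivity)]
    nlinarith
  nlinarith [mul_le_mul_of_nonneg_left hca (by positivity : 0 ≤ 3 * (1 / 2 + γ) ^ 3),
    mul_le_mul_of_nonneg_left hcb (by nlinarith : 0 ≤ (1 / 2 - γ) ^ 3),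
    mul_le_mul_of_nonneg_left hc13 (by nlinarith : 0 ≤ γ * (27 / 8 - 3 * (1 / 2 + γ) ^ 3)),
    mul_le_mul_of_nonneg_left (cosh_pos (1 / 2 * u)).le
      (by nlinarith : 0 ≤ 2 * γ * (1 - γ ^ 2 - 3 * γ))]

theorem renyiPsi_nonpos {γ s : ℝ} (hγ : 0 ≤ γ) (hγ1 : γ ^ 2 + 3 * γ ≤ 1) (hs : 0 ≤ s) :
    renyiPsi γ s ≤ 0 := by
  have := sum_mul_sinh_nonpos Finset.univ ![3, 1, -γ, -(4 + γ)]
    ![1 / 2 + γ, 1 / 2 - γ, 3 / 2, 1 / 2] (by simp [Fin.sum_univ_four]; ring) (fun u hu => by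
      simp only [Fin.sum_univ_four, Matrix.cons_val]
      linarith [renyiPsi_third_deriv_nonpos hγ hγ1 hu]) hs
  simp only [Fin.sum_univ_four, Matrix.cons_val] at this
  rw [renyiPsi, show s / 2 = 1 / 2 * s by ring]
  linarith

noncomputable def renyiPhi (α r : ℝ) : ℝ :=
  (1 - α) * (1 - r ^ 3) - (3 + α) * (r * (1 - r)) + r ^ α * (1 - 3 * r) + r ^ (2 - α) * (3 - r)

theorem renyiPhi_eq (α r : ℝ) : renyiPhi α r = 2 * (1 - r) * (r ^ α + r ^ (2 - α) - 2 * r) +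
    (1 + r) * ((1 - α) * (1 - r ^ 2) - (r ^ α - r ^ (2 - α))) := by
  rw [renyiPhi]; ring

theorem two_mul_le_rpow_add_rpow {α r : ℝ} (hr : 0 < r) : 2 * r ≤ r ^ α + r ^ (2 - α) := by
  have hprod : r ^ α * r ^ (2 - α) = r ^ 2 := by
    rw [← rpow_add hr, add_sub_cancel, rpow_two]
  have := rpow_pos_of_pos hr α
  have := rpow_pos_of_pos hr (2 - α)
  nlinarith [sq_nonneg (r ^ α - r ^ (2 - α))]

theorem rpow_sub_rpow_le {α r : ℝ} (hα0 : 0 ≤ α) (hα1 : α ≤ 1) (hr0 : 0 < r) (hr1 : r ≤ 1) :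
    r ^ α - r ^ (2 - α) ≤ (1 - α) * (1 - r ^ 2) := by
  obtain ⟨s, hs, rfl⟩ := exists_eq_exp_neg hr0 hr1
  have h := sinh_mul_le_mul_sinh (β := 1 - α) (by linarith) (by linarith) hs
  rw [sinh_eq, sinh_eq] at h
  rw [← exp_mul, ← exp_mul, show -s * α = -s + (1 - α) * s by ring,
    show -s * (2 - α) = -s + -((1 - α) * s) by ring, exp_add, exp_add]
  have hinv : exp (-s) * exp s = 1 := by rw [← exp_add, neg_add_cancel, exp_zero]
  nlinarith [mul_le_mul_of_nonneg_left h (exp_pos (-s)).le]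

theorem renyiPhi_nonneg {α r : ℝ} (hα0 : 0 ≤ α) (hα1 : α ≤ 1) (hr0 : 0 < r) (hr1 : r ≤ 1) :
    0 ≤ renyiPhi α r := by
  have hamgm := two_mul_le_rpow_add_rpow (α := α) hr0
  have hsinh := rpow_sub_rpow_le hα0 hα1 hr0 hr1
  rw [renyiPhi_eq]
  exact add_nonneg (mul_nonneg (by linarith) (by linarith)) (mul_nonneg (by linarith) (by linarith))

theorem renyiPhi_exp_neg (α s : ℝ) :
    renyiPhi α (exp (-s)) = 2 * exp (-(3 / 2 * s)) * renyiPsi (α - 1) s := by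
  set y := exp (s / 2) with hy
  set z := exp ((α - 1) * s) with hz
  have e1 : exp (-s) = (y * y)⁻¹ := by
    rw [show -s = -(s / 2 + s / 2) by ring, exp_neg, exp_add]
  have e2 : exp (-s) ^ α = (y * y * z)⁻¹ := by
    rw [← exp_mul, show -s * α = -(s / 2 + s / 2 + (α - 1) * s) by ring, exp_neg, exp_add, exp_add]
  have e3 : exp (-s) ^ (2 - α) = z / (y * y) := by
    rw [← exp_mul, show -s * (2 - α) = (α - 1) * s - (s / 2 + s / 2) by ring, exp_sub, exp_add]
  have e4 : exp (-(3 / 2 * s)) = (y * y * y)⁻¹ := by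
    rw [show -(3 / 2 * s) = -(s / 2 + s / 2 + s / 2) by ring, exp_neg, exp_add, exp_add]
  rw [renyiPhi, renyiPsi, e2, e3, e1, e4, show (1 / 2 + (α - 1)) * s = s / 2 + (α - 1) * s by ring,
    show (1 / 2 - (α - 1)) * s = s / 2 - (α - 1) * s by ring,
    show 3 / 2 * s = s / 2 + s / 2 + s / 2 by ring]
  simp only [sinh_eq, neg_add, neg_sub, exp_neg, exp_add, exp_sub, ← hy, ← hz]
  have : 0 < y := exp_pos _
  have : 0 < z := exp_pos _
  field_simp
  ring

theorem renyiPhi_nonpos {α r : ℝ} (hα1 : 1 ≤ α) (hα3 : α ^ 2 + α ≤ 3) (hr0 : 0 < r) (hr1 : r ≤ 1) :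
    renyiPhi α r ≤ 0 := by
  obtain ⟨s, hs, rfl⟩ := exists_eq_exp_neg hr0 hr1
  rw [renyiPhi_exp_neg]
  exact mul_nonpos_of_nonneg_of_nonpos (by positivity)
    (renyiPsi_nonpos (by linarith) (by nlinarith) hs)

theorem one_sub_mul_renyiPhi_nonneg {α r : ℝ} (hα0 : 0 ≤ α) (hα3 : α ^ 2 + α ≤ 3) (hr0 : 0 < r)
    (hr1 : r ≤ 1) : 0 ≤ (1 - α) * renyiPhi α r := by
  rcases le_total α 1 with hα1 | hα1
  · exact mul_nonneg (by linarith) (renyiPhi_nonneg hα0 hα1 hr0 hr1)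
  · exact mul_nonneg_of_nonpos_of_nonpos (by linarith) (renyiPhi_nonpos hα1 hα3 hr0 hr1)

noncomputable def eigMinus (x : ℝ) : ℝ := (1 - √(1 - x)) / 2

noncomputable def eigPlus (x : ℝ) : ℝ := (1 + √(1 - x)) / 2

noncomputable def eigPowSum (α x : ℝ) : ℝ := eigMinus x ^ α + eigPlus x ^ α

noncomputable def eigPowSumDeriv (α x : ℝ) : ℝ :=
  α * (eigMinus x ^ (α - 1) - eigPlus x ^ (α - 1)) / (4 * √(1 - x))

noncomputable def eigPowSumDeriv2 (α x : ℝ) : ℝ :=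
  α * (α - 1) * (eigMinus x ^ (α - 2) + eigPlus x ^ (α - 2)) / (16 * √(1 - x) ^ 2) +
    α * (eigMinus x ^ (α - 1) - eigPlus x ^ (α - 1)) / (8 * √(1 - x) ^ 3)

theorem eigMinus_pos {x : ℝ} (hx0 : 0 < x) : 0 < eigMinus x := by
  have : √(1 - x) < 1 := by rw [sqrt_lt' one_pos]; linarith
  rw [eigMinus]; linarith

theorem eigPlus_pos (x : ℝ) : 0 < eigPlus x := by
  rw [eigPlus]; positivity

theorem eigMinus_nonneg {x : ℝ} (hx : 0 ≤ x) : 0 ≤ eigMinus x := by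
  have : √(1 - x) ≤ 1 := sqrt_le_one.2 (by linarith)
  rw [eigMinus]; linarith

theorem eigPowSum_pos (α : ℝ) {x : ℝ} (hx : 0 ≤ x) : 0 < eigPowSum α x :=
  add_pos_of_nonneg_of_pos (rpow_nonneg (eigMinus_nonneg hx) α) (rpow_pos_of_pos (eigPlus_pos x) α)

theorem renyiF_eq (α : ℝ) : renyiF α = fun x => log (eigPowSum α x) / ((1 - α) * log 2) := by
  ext x
  simp only [renyiF, logb, eigPowSum, eigMinus, eigPlus, div_eq_mul_inv, mul_inv]
  ring

section Derivatives

variable {x : ℝ}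

theorem hasDerivAt_sqrt_one_sub (hx : x < 1) :
    HasDerivAt (fun y => √(1 - y)) (-(1 / (2 * √(1 - x)))) x := by
  convert ((hasDerivAt_id' x).const_sub 1).sqrt (by simp; linarith) using 1
  ring

theorem hasDerivAt_eigMinus (hx1 : x < 1) : HasDerivAt eigMinus (1 / (4 * √(1 - x))) x := by
  refine (((hasDerivAt_sqrt_one_sub hx1).const_sub 1).div_const 2).congr_deriv ?_
  ring

theorem hasDerivAt_eigPlus (hx1 : x < 1) : HasDerivAt eigPlus (-(1 / (4 * √(1 - x)))) x := by
  refine (((hasDerivAt_sqrt_one_sub hx1).const_add 1).div_const 2).congr_deriv ?_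
  ring

theorem hasDerivAt_eigMinus_rpow (β : ℝ) (hx0 : 0 < x) (hx1 : x < 1) :
    HasDerivAt (fun y => eigMinus y ^ β) (β * eigMinus x ^ (β - 1) / (4 * √(1 - x))) x := by
  convert (hasDerivAt_eigMinus hx1).rpow_const (p := β) (Or.inl (eigMinus_pos hx0).ne') using 1
  ring

theorem hasDerivAt_eigPlus_rpow (β : ℝ) (hx1 : x < 1) :
    HasDerivAt (fun y => eigPlus y ^ β) (-(β * eigPlus x ^ (β - 1) / (4 * √(1 - x)))) x := by
  convert (hasDerivAt_eigPlus hx1).rpow_const (p := β) (Or.inl (eigPlus_pos x).ne') using 1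
  ring

theorem hasDerivAt_eigPowSum (α : ℝ) (hx0 : 0 < x) (hx1 : x < 1) :
    HasDerivAt (eigPowSum α) (eigPowSumDeriv α x) x := by
  refine ((hasDerivAt_eigMinus_rpow α hx0 hx1).add (hasDerivAt_eigPlus_rpow α hx1)).congr_deriv ?_
  rw [eigPowSumDeriv]
  ring

theorem hasDerivAt_eigPowSumDeriv (α : ℝ) (hx0 : 0 < x) (hx1 : x < 1) :
    HasDerivAt (eigPowSumDeriv α) (eigPowSumDeriv2 α x) x := by
  have ht : 0 < √(1 - x) := sqrt_pos.2 (by linarith)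
  refine ((((hasDerivAt_eigMinus_rpow (α - 1) hx0 hx1).sub
    (hasDerivAt_eigPlus_rpow (α - 1) hx1)).const_mul α).div
    ((hasDerivAt_sqrt_one_sub hx1).const_mul 4) (by positivity)).congr_deriv ?_
  rw [eigPowSumDeriv2, show α - 1 - 1 = α - 2 by ring, Pi.sub_apply]
  field_simp
  ring

theorem eigPowSumDeriv2_mul_sub_sq (α : ℝ) (hx0 : 0 < x) (hx1 : x < 1) :
    eigPowSumDeriv2 α x * eigPowSum α x - eigPowSumDeriv α x ^ 2 =
      -(α * eigMinus x ^ α * eigPlus x ^ α * eigPlus x / (16 * eigMinus x ^ 2 * √(1 - x) ^ 3)) *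
        renyiPhi α (eigMinus x / eigPlus x) := by
  have hp := eigMinus_pos hx0
  have hq := eigPlus_pos x
  have ht : √(1 - x) = eigPlus x - eigMinus x := by rw [eigPlus, eigMinus]; ring
  have htpos : 0 < eigPlus x - eigMinus x := ht ▸ sqrt_pos.2 (by linarith)
  rw [eigPowSumDeriv2, eigPowSum, eigPowSumDeriv, renyiPhi, ht, div_rpow hp.le hq.le,
    div_rpow hp.le hq.le, rpow_sub hp, rpow_sub hq, rpow_sub hp, rpow_sub hq, rpow_sub hp,
    rpow_sub hq, rpow_one, rpow_one, rpow_two, rpow_two]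
  field_simp
  ring

theorem one_sub_mul_eigPowSumDeriv2_mul_sub_sq_nonpos {α : ℝ} (hα0 : 0 < α) (hα3 : α ^ 2 + α ≤ 3)
    (hx0 : 0 < x) (hx1 : x < 1) :
    (1 - α) * (eigPowSumDeriv2 α x * eigPowSum α x - eigPowSumDeriv α x ^ 2) ≤ 0 := by
  have hp := eigMinus_pos hx0
  have hq := eigPlus_pos x
  have ht : 0 < √(1 - x) := sqrt_pos.2 (by linarith)
  have hratio : eigMinus x / eigPlus x ≤ 1 := by
    rw [div_le_one hq, eigMinus, eigPlus]; linarith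
  rw [eigPowSumDeriv2_mul_sub_sq α hx0 hx1, mul_left_comm, neg_mul]
  exact neg_nonpos.2 (mul_nonneg (by positivity)
    (one_sub_mul_renyiPhi_nonneg hα0.le hα3 (div_pos hp hq) hratio))

end Derivatives

theorem continuousOn_renyiF {α : ℝ} (hα : 0 ≤ α) : ContinuousOn (renyiF α) (Icc 0 1) := by
  have hS : Continuous (eigPowSum α) := by
    unfold eigPowSum eigMinus eigPlus
    exact (by fun_prop : Continuous fun x => (1 - √(1 - x)) / 2).rpow_const (fun _ => Or.inr hα)
      |>.add ((by fun_prop : Continuous fun x => (1 + √(1 - x)) / 2).rpow_const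
        (fun _ => Or.inr hα))
  rw [renyiF_eq]
  exact (hS.continuousOn.log fun x hx => (eigPowSum_pos α hx.1).ne').div_const _

theorem concaveOn_renyiF {α : ℝ} (hα0 : 0 < α) (hα1 : α ≠ 1) (hα3 : α ^ 2 + α ≤ 3) :
    ConcaveOn ℝ (Icc 0 1) (renyiF α) := by
  have hc : 0 < log 2 := log_pos one_lt_two
  have h1α : 1 - α ≠ 0 := sub_ne_zero.2 hα1.symm
  refine concaveOn_of_hasDerivWithinAt2_nonpos (convex_Icc 0 1) (continuousOn_renyiF hα0.le)
    (f' := fun x => eigPowSumDeriv α x / eigPowSum α x / ((1 - α) * log 2))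
    (f'' := fun x => (eigPowSumDeriv2 α x * eigPowSum α x - eigPowSumDeriv α x ^ 2) /
      eigPowSum α x ^ 2 / ((1 - α) * log 2)) ?_ ?_ ?_ <;>
    intro x hx <;> rw [interior_Icc] at hx <;> obtain ⟨hx0, hx1⟩ := hx
  · have hS := eigPowSum_pos α hx0.le
    rw [renyiF_eq]
    exact (((hasDerivAt_eigPowSum α hx0 hx1).log hS.ne').div_const _).hasDerivWithinAt
  · have hS := eigPowSum_pos α hx0.le
    refine ((((hasDerivAt_eigPowSumDeriv α hx0 hx1).div (hasDerivAt_eigPowSum α hx0 hx1)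
      hS.ne').div_const _).congr_deriv (by ring)).hasDerivWithinAt
  · have hS := eigPowSum_pos α hx0.le
    have key := one_sub_mul_eigPowSumDeriv2_mul_sub_sq_nonpos hα0 hα3 hx0 hx1
    calc _ = (1 - α) * (eigPowSumDeriv2 α x * eigPowSum α x - eigPowSumDeriv α x ^ 2) /
          ((1 - α) ^ 2 * log 2 * eigPowSum α x ^ 2) := by field_simp
      _ ≤ 0 := div_nonpos_of_nonpos_of_nonneg key (by positivity)

theorem renyiF_zero {α : ℝ} (hα : α ≠ 0) : renyiF α 0 = 0 := by
  simp [renyiF, zero_rpow hα]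

theorem renyiF_one {α : ℝ} (hα : α ≠ 1) : renyiF α 1 = 1 := by
  have h2 : (1 / 2 : ℝ) ^ α + (1 / 2) ^ α = 2 ^ (1 - α) := by
    rw [rpow_sub two_pos, rpow_one, one_div, inv_rpow zero_le_two]; ring
  rw [renyiF, sub_self, sqrt_zero, sub_zero, add_zero, h2, logb_rpow two_pos one_lt_two.ne']
  field_simp [sub_ne_zero.2 hα.symm]

theorem self_le_renyiF {α x : ℝ} (hα0 : 0 < α) (hα1 : α ≠ 1) (hα3 : α ^ 2 + α ≤ 3)
    (hx : x ∈ Icc (0 : ℝ) 1) : x ≤ renyiF α x := by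
  have := (concaveOn_renyiF hα0 hα1 hα3).2 (left_mem_Icc.2 zero_le_one)
    (right_mem_Icc.2 zero_le_one) (sub_nonneg.2 hx.2) hx.1 (sub_add_cancel 1 x)
  simpa [renyiF_zero hα0.ne', renyiF_one hα1] using this

end

open Finset in
/-- Scalar form of Theorem 4 (pure-state case): for `(√7-1)/2 ≤ α ≤ (√13-1)/2`, `α ≠ 1`,
`n ≥ 2`, and nonnegative reals `c₂, …, c_n` with `∑ cᵢ ≤ 1`, one has
`(f_α(∑ cᵢ))² ≤ (n-1) * ∑ (f_α(cᵢ))²`. -/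
theorem renyiF_sq_monogamy_scalar (α : ℝ) (hα1 : (Real.sqrt 7 - 1) / 2 ≤ α)
    (hα2 : α ≤ (Real.sqrt 13 - 1) / 2) (hα : α ≠ 1)
    (n : ℕ) (hn : 2 ≤ n) (c : ℕ → ℝ) (hc : ∀ i ∈ Icc 2 n, 0 ≤ c i)
    (hsum : ∑ i ∈ Icc 2 n, c i ≤ 1) :
    (renyiF α (∑ i ∈ Icc 2 n, c i)) ^ 2 ≤
      (n - 1 : ℝ) * ∑ i ∈ Icc 2 n, (renyiF α (c i)) ^ 2 := by
  have hα0 : 0 < α := by nlinarith [Real.sq_sqrt (show (0 : ℝ) ≤ 7 by norm_num), Real.sqrt_nonneg 7]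
  have hα3 : α ^ 2 + α ≤ 3 := by
    nlinarith [Real.sq_sqrt (show (0 : ℝ) ≤ 13 by norm_num), Real.sqrt_nonneg 13]
  have hconc := concaveOn_renyiF hα0 hα hα3
  have hsub := hconc.map_sum_le (renyiF_zero hα0.ne') (Icc 2 n) hc hsum
  have hnonneg : 0 ≤ renyiF α (∑ i ∈ Icc 2 n, c i) :=
    (sum_nonneg hc).trans (self_le_renyiF hα0 hα hα3 ⟨sum_nonneg hc, hsum⟩)
  have hcard : ((#(Icc 2 n) : ℕ) : ℝ) = n - 1 := by
    rw [Nat.card_Icc, Nat.cast_sub (by omega)]; push_cast; ring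
  calc (renyiF α (∑ i ∈ Icc 2 n, c i)) ^ 2 ≤ (∑ i ∈ Icc 2 n, renyiF α (c i)) ^ 2 :=
        pow_le_pow_left₀ hnonneg hsub 2
    _ ≤ #(Icc 2 n) * ∑ i ∈ Icc 2 n, (renyiF α (c i)) ^ 2 := sq_sum_le_card_mul_sum_sq
    _ = (n - 1 : ℝ) * ∑ i ∈ Icc 2 n, (renyiF α (c i)) ^ 2 := by rw [hcard]
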